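/- arXiv:1807.00268 — 3 statements merged into one kernel-verified Lean document; each statement's English description precedes it below -/
import Mathlib

section
/- Every De Morgan semi-Heyting algebra of level 1 satisfies the Stone identity x* ∨ x** = 1. -/
class SemiHeyting (α : Type*) extends Lattice α, BoundedOrder α where
  himp : α → α → α
  sh1 : ∀ x y : α, x ⊓ himp x y = x ⊓ y
  sh2 : ∀ x y z : α, x ⊓ himp y z = x ⊓ himp (x ⊓ y) (x ⊓ z)
  sh3 : ∀ x : α, himp x x = ⊤

namespace SemiHeyting

variable {α : Type*} [SemiHeyting α]

def star (x : α) : α := himp x ⊥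

end SemiHeyting

class DQD (α : Type*) extends SemiHeyting α where
  prime : α → α
  prime_bot : prime ⊥ = ⊤
  prime_top : prime ⊤ = ⊥
  prime_inf : ∀ x y : α, prime (x ⊓ y) = prime x ⊔ prime y
  prime_prime_sup : ∀ x y : α, prime (prime (x ⊔ y)) = prime (prime x) ⊔ prime (prime y)
  prime_prime_le : ∀ x : α, prime (prime x) ≤ x

class DmsSt (α : Type*) extends DQD α where
  stone : ∀ x : α, SemiHeyting.star x ⊔ SemiHeyting.star (SemiHeyting.star x) = ⊤
  jdm : ∀ x y : α, prime (x ⊔ y) = prime x ⊓ prime y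

open SemiHeyting DQD

/-! Put `c := (x*)′ ⊓ (x**)′`. Level 1 applied at `y′` gives `y′ ⊓ y* ≤ (y*)′*`, hence
`y′ ⊓ y* ⊓ (y*)′ = ⊥` for every `y`. Taking `y = x*` and `y = x**` (and `x*** = x*`) shows that
`c` is disjoint from both `x**` and `x*`; since `c ⊓ x* = ⊥` forces `c ≤ x**`, we get `c = ⊥`.
By De Morgan, `c = (x* ⊔ x**)′`, so `x* ⊔ x** = c′ = ⊥′ = ⊤`. -/

namespace SemiHeyting

variable {α : Type*} [SemiHeyting α]

theorem inf_star_self (x : α) : x ⊓ star x = ⊥ :=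
  (sh1 x ⊥).trans (inf_bot_eq x)

theorem le_star_of_inf_eq_bot {u v : α} (h : u ⊓ v = ⊥) : u ≤ star v := by
  have key := sh2 u v ⊥
  rw [h, inf_bot_eq, sh3, inf_top_eq] at key
  exact le_of_inf_eq key

theorem star_anti {u v : α} (h : u ≤ v) : star v ≤ star u :=
  le_star_of_inf_eq_bot <| le_bot_iff.mp <|
    calc star v ⊓ u ≤ v ⊓ star v := by rw [inf_comm]; exact inf_le_inf_right _ h
    _ = ⊥ := inf_star_self v

theorem le_star_star (x : α) : x ≤ star (star x) :=
  le_star_of_inf_eq_bot (inf_star_self x)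

theorem star_star_star (x : α) : star (star (star x)) = star x :=
  le_antisymm (star_anti (le_star_star x)) (le_star_star (star x))

theorem eq_bot_of_inf_star_eq_bot_of_inf_star_star_eq_bot {c u : α} (h₁ : c ⊓ star u = ⊥)
    (h₂ : c ⊓ star (star u) = ⊥) : c = ⊥ := by
  rwa [inf_eq_left.mpr (le_star_of_inf_eq_bot h₁)] at h₂

end SemiHeyting

namespace DQD

variable {α : Type*} [DQD α]

theorem prime_sup_of_involutive (hdm : ∀ x : α, prime (prime x) = x) (u v : α) :
    prime (u ⊔ v) = prime u ⊓ prime v := by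
  rw [← hdm (prime u ⊓ prime v), prime_inf, hdm, hdm]

theorem eq_top_of_prime_eq_bot (hdm : ∀ x : α, prime (prime x) = x) {w : α}
    (h : prime w = ⊥) : w = ⊤ := by
  rw [← hdm w, h, prime_bot]

theorem prime_inf_star_inf_prime_star_eq_bot (hdm : ∀ x : α, prime (prime x) = x)
    (hlev : ∀ x : α, x ⊓ star (prime x) = star (prime (x ⊓ star (prime x)))) (y : α) :
    prime y ⊓ star y ⊓ prime (star y) = ⊥ := by
  have hle : prime y ⊓ star y ≤ star (prime (star y)) := by
    have h := hlev (prime y)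
    rw [hdm, prime_inf, hdm] at h
    rw [h]
    exact star_anti le_sup_right
  exact le_bot_iff.mp <|
    calc prime y ⊓ star y ⊓ prime (star y) ≤ star (prime (star y)) ⊓ prime (star y) :=
          inf_le_inf_right _ hle
    _ = ⊥ := by rw [inf_comm, inf_star_self]

end DQD

theorem stmt8 {α : Type*} [DQD α]
    (hdm : ∀ x : α, DQD.prime (DQD.prime x) = x)
    (hlev : ∀ x : α, x ⊓ SemiHeyting.star (DQD.prime x)
      = SemiHeyting.star (DQD.prime (x ⊓ SemiHeyting.star (DQD.prime x))))
    (x : α) :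
    SemiHeyting.star x ⊔ SemiHeyting.star (SemiHeyting.star x) = ⊤ := by
  have disjoint_star_star :
      prime (star x) ⊓ prime (star (star x)) ⊓ star (star x) = ⊥ := by
    rw [← prime_inf_star_inf_prime_star_eq_bot hdm hlev (star x)]
    ac_rfl
  have disjoint_star : prime (star x) ⊓ prime (star (star x)) ⊓ star x = ⊥ := by
    rw [← prime_inf_star_inf_prime_star_eq_bot hdm hlev (star (star x)), star_star_star]
    ac_rfl
  apply eq_top_of_prime_eq_bot hdm
  rw [prime_sup_of_involutive hdm]
  exact eq_bot_of_inf_star_eq_bot_of_inf_star_star_eq_bot disjoint_star disjoint_star_star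
end

section
/- Let L be a dually ms Stone semi-Heyting algebra. Then for all x in L, x**′ = x*′*. -/
open SemiHeyting DQD

/-!
By the Stone identity, `x*` and `x**` are complements, and the two De Morgan laws for `′` carry
this over to `x*′` and `x**′`. A semi-Heyting algebra is a distributive lattice, and there the
pseudocomplement of an element that has a complement is that complement; hence `x*′* = x**′`.
-/

namespace SemiHeyting

variable {α : Type*} [SemiHeyting α]

/-- What survives of the Heyting adjunction: the consequent has to be relativised to `x`. -/
theorem le_himp_inf_of_inf_le {x y w : α} (h : x ⊓ y ≤ w) : y ≤ himp x (x ⊓ w) := by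
  have hyxw : y ⊓ (x ⊓ w) = y ⊓ x := by
    rw [← inf_assoc]
    exact inf_eq_left.mpr (inf_comm y x ▸ h)
  calc y = y ⊓ himp (y ⊓ x) (y ⊓ (x ⊓ w)) := by rw [hyxw, sh3, inf_top_eq]
    _ = y ⊓ himp x (x ⊓ w) := (sh2 y x (x ⊓ w)).symm
    _ ≤ himp x (x ⊓ w) := inf_le_right

instance toDistribLattice : DistribLattice α :=
  DistribLattice.ofInfSupLe fun x y z => by
    have hle : y ⊔ z ≤ himp x (x ⊓ (x ⊓ y ⊔ x ⊓ z)) :=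
      sup_le (le_himp_inf_of_inf_le le_sup_left) (le_himp_inf_of_inf_le le_sup_right)
    calc x ⊓ (y ⊔ z) ≤ x ⊓ himp x (x ⊓ (x ⊓ y ⊔ x ⊓ z)) := inf_le_inf_left x hle
      _ = x ⊓ (x ⊓ (x ⊓ y ⊔ x ⊓ z)) := sh1 _ _
      _ ≤ x ⊓ y ⊔ x ⊓ z := inf_le_of_right_le inf_le_right

theorem disjoint_star (x : α) : Disjoint x (star x) := by
  rw [disjoint_iff, star, sh1, inf_bot_eq]

theorem le_star_of_disjoint {x y : α} (h : Disjoint x y) : y ≤ star x := by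
  simpa only [star, inf_bot_eq] using le_himp_inf_of_inf_le (w := ⊥) h.le_bot

theorem star_eq_of_isCompl {x y : α} (h : IsCompl x y) : star x = y :=
  le_antisymm ((disjoint_star x).symm.le_of_codisjoint h.codisjoint)
    (le_star_of_disjoint h.disjoint)

end SemiHeyting

namespace DmsSt

variable {α : Type*} [DmsSt α]

theorem isCompl_star_star (x : α) : IsCompl (star x) (star (star x)) :=
  ⟨disjoint_star _, codisjoint_iff.mpr (stone x)⟩

theorem isCompl_prime {x y : α} (h : IsCompl x y) : IsCompl (prime x) (prime y) :=
  .of_eq (by rw [← jdm, h.sup_eq_top, prime_top]) (by rw [← prime_inf, h.inf_eq_bot, prime_bot])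

end DmsSt

theorem stmt12 {α : Type*} [DmsSt α] (x : α) :
    DQD.prime (SemiHeyting.star (SemiHeyting.star x))
      = SemiHeyting.star (DQD.prime (SemiHeyting.star x)) :=
  (star_eq_of_isCompl (DmsSt.isCompl_prime (DmsSt.isCompl_star_star x))).symm
end

section
/- Let L be a dually ms Stone semi-Heyting algebra. Then for all x in L, (x*)⁺ ≤ x**, where y⁺ := y′*′. -/
open SemiHeyting DQD

/-! Stone's identity `x* ∨ x** = 1` together with join-De Morgan gives `x*′ ∧ x**′ = 0`, hence
`x**′ ≤ x*′*`; applying `′` and `x″ ≤ x` yields `x*′*′ ≤ x**″ ≤ x**`. -/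

theorem SemiHeyting.le_star_of_inf_eq_bot_s13 {α : Type*} [SemiHeyting α] {a b : α} (h : a ⊓ b = ⊥) :
    b ≤ star a := by
  have hb : b ⊓ star a = b := by
    rw [star, sh2, inf_comm b a, h, inf_bot_eq, sh3, inf_top_eq]
  exact hb ▸ inf_le_right

theorem DQD.prime_antitone {α : Type*} [DQD α] : Antitone (prime : α → α) := by
  intro a b hab
  rw [← inf_eq_left.mpr hab, prime_inf]
  exact le_sup_right

theorem DmsSt.prime_star_inf_prime_star_star_eq_bot {α : Type*} [DmsSt α] (x : α) :
    prime (star x) ⊓ prime (star (star x)) = ⊥ := by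
  rw [← jdm, stone, prime_top]

theorem stmt13 {α : Type*} [DmsSt α] (x : α) :
    DQD.prime (SemiHeyting.star (DQD.prime (SemiHeyting.star x)))
      ≤ SemiHeyting.star (SemiHeyting.star x) :=
  calc prime (star (prime (star x)))
      ≤ prime (prime (star (star x))) :=
        prime_antitone (le_star_of_inf_eq_bot_s13 (DmsSt.prime_star_inf_prime_star_star_eq_bot x))
    _ ≤ star (star x) := prime_prime_le _
end
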